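/- arXiv:1308.3046 — 4 statements merged into one kernel-verified Lean document; each statement's English description precedes it below -/
import Mathlib

section
/- (Kierstead) Let L be a list assignment for a finite simple graph G = (V,E), and let X ⊆ V be a maximal non-empty subset such that |L(X)| < |X|, where L(X) denotes the union of the lists L(u) over u ∈ X. If the induced subgraph G[X] is L|_X-colorable (where L|_X is the restriction of L to X), then G is L-colorable. -/
/-- `G` has a proper coloring in which every vertex gets a color from its own list. -/
def ListColorable {V : Type*} (G : SimpleGraph V) (L : V → Finset ℕ) : Prop :=
  ∃ c : V → ℕ, (∀ v, c v ∈ L v) ∧ ∀ ⦃u w⦄, G.Adj u w → c u ≠ c w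

/-- `G` is `k`-choosable: `L`-colorable for every list assignment with all lists of size ≥ `k`. -/
def Choosable {V : Type*} (G : SimpleGraph V) (k : ℕ) : Prop :=
  ∀ L : V → Finset ℕ, (∀ v, k ≤ (L v).card) → ListColorable G L

/-- Kierstead's lemma: if `X` is a maximal nonempty set of vertices with `|L(X)| < |X|`
and the induced subgraph `G[X]` is `L|_X`-colorable, then `G` is `L`-colorable. -/
theorem kierstead_lemma {V : Type*} [Fintype V] [DecidableEq V] (G : SimpleGraph V)
    (L : V → Finset ℕ) (X : Finset V) (hne : X.Nonempty)
    (hlt : (X.biUnion L).card < X.card)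
    (hmax : ∀ Y : Finset V, X ⊂ Y → ¬ (Y.biUnion L).card < Y.card)
    (hcol : ListColorable (SimpleGraph.induce (↑X : Set V) G) (fun v => L v.val)) :
    ListColorable G L := by
  classical
  obtain ⟨c0, hc0mem, hc0adj⟩ := hcol
  set A : Finset ℕ := X.biUnion L with hA
  -- lists for vertices outside X
  set t : {v : V // v ∉ X} → Finset ℕ := fun v => L v.val \ A with ht
  -- Hall condition
  have hall : ∀ s : Finset {v : V // v ∉ X}, s.card ≤ (s.biUnion t).card := by
    intro s
    rcases s.eq_empty_or_nonempty with rfl | hs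
    · simp
    · set Y : Finset V := s.image Subtype.val with hY
      have hYcard : Y.card = s.card := Finset.card_image_of_injective _ Subtype.val_injective
      have hYX : Disjoint Y X := by
        rw [Finset.disjoint_left]
        rintro v hv hvX
        obtain ⟨⟨w, hw⟩, _, rfl⟩ := Finset.mem_image.mp hv
        exact hw hvX
      have hsub : X ⊂ X ∪ Y := by
        refine Finset.ssubset_iff_of_subset Finset.subset_union_left |>.mpr ?_
        obtain ⟨v, hv⟩ := hs
        exact ⟨v.val, Finset.mem_union_right _ (Finset.mem_image_of_mem _ hv), v.2⟩
      have hZ := hmax (X ∪ Y) hsub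
      push_neg at hZ
      have hZcard : X.card + Y.card = (X ∪ Y).card := by
        rw [Finset.card_union_of_disjoint hYX.symm]
      -- (X ∪ Y).biUnion L ⊆ A ∪ Y.biUnion (fun v => L v \ A)
      have hsub2 : (X ∪ Y).biUnion L ⊆ A ∪ Y.biUnion (fun v => L v \ A) := by
        intro x hx
        rw [Finset.mem_biUnion] at hx
        obtain ⟨v, hv, hxv⟩ := hx
        by_cases hxA : x ∈ A
        · exact Finset.mem_union_left _ hxA
        · rcases Finset.mem_union.mp hv with hvX | hvY
          · exact absurd (Finset.mem_biUnion.mpr ⟨v, hvX, hxv⟩) hxA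
          · exact Finset.mem_union_right _
              (Finset.mem_biUnion.mpr ⟨v, hvY, Finset.mem_sdiff.mpr ⟨hxv, hxA⟩⟩)
      have hcard2 : (X ∪ Y).card ≤ A.card + (Y.biUnion (fun v => L v \ A)).card :=
        le_trans hZ (le_trans (Finset.card_le_card hsub2) (Finset.card_union_le _ _))
      have hYbi : (s.biUnion t).card = (Y.biUnion (fun v => L v \ A)).card := by
        congr 1
        ext x
        simp [hY, ht]
      have hAX : A.card + 1 ≤ X.card := hlt
      omega
      -- combine: X.card + Y.card ≤ A.card + card ≤ X.card - 1 + card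
  obtain ⟨f, hfinj, hfmem⟩ :=
    (Finset.all_card_le_biUnion_card_iff_existsInjective' t).mp hall
  refine ⟨fun v => if h : v ∈ X then c0 ⟨v, h⟩ else f ⟨v, h⟩, ?_, ?_⟩
  · intro v
    by_cases h : v ∈ X
    · simpa [h] using hc0mem ⟨v, h⟩
    · simp only [h, dif_neg, not_false_iff]
      exact (Finset.mem_sdiff.mp (hfmem ⟨v, h⟩)).1
  · intro u w hadj
    by_cases hu : u ∈ X <;> by_cases hw : w ∈ X <;> simp only [hu, hw, dif_pos, dif_neg,
      not_false_iff]
    · exact hc0adj (by simpa [SimpleGraph.induce] using hadj)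
    · -- u ∈ X, w ∉ X : c0 u ∈ A, f w ∉ A
      intro heq
      have h1 : c0 ⟨u, hu⟩ ∈ A := Finset.mem_biUnion.mpr ⟨u, hu, hc0mem ⟨u, hu⟩⟩
      have h2 : f ⟨w, hw⟩ ∉ A := (Finset.mem_sdiff.mp (hfmem ⟨w, hw⟩)).2
      exact h2 (heq ▸ h1)
    · intro heq
      have h1 : c0 ⟨w, hw⟩ ∈ A := Finset.mem_biUnion.mpr ⟨w, hw, hc0mem ⟨w, hw⟩⟩
      have h2 : f ⟨u, hu⟩ ∉ A := (Finset.mem_sdiff.mp (hfmem ⟨u, hu⟩)).2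
      exact h2 (heq ▸ h1)
    · intro heq
      have := hfinj heq
      have : u = w := congrArg Subtype.val this
      exact hadj.ne this
end

section
/- (Kierstead) A finite simple graph G = (V,E) is k-choosable if G is L-colorable for every k-list assignment L such that |L(V)| < |V|, where L(V) denotes the union of all lists. -/
/-!
If the lists satisfy Hall's condition, a system of distinct representatives is a proper
coloring. Otherwise take a Hall-deficient set `X` (`|L(X)| < |X|`) of maximum size. Replacing
every list outside `X` by a fixed `k`-subset of `L(X)` gives a `k`-list assignment using fewer
than `|V|` colors, so by hypothesis it has a proper coloring, which colors `X` from `L`.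
By maximality of `X`, the lists `L v \ L(X)` with `v ∉ X` satisfy Hall's condition; a system of
distinct representatives for them completes the coloring, and it never clashes with `X` since
it avoids `L(X)`.
-/

open Finset

section Hall

variable {ι α : Type*} [DecidableEq α] (L : ι → Finset α)

theorem exists_max_card_deficient [Fintype ι] (h : ∃ S : Finset ι, #(S.biUnion L) < #S) :
    ∃ X : Finset ι, #(X.biUnion L) < #X ∧
      ∀ Y : Finset ι, #(Y.biUnion L) < #Y → #Y ≤ #X := by
  obtain ⟨S, hS⟩ := h
  obtain ⟨X, hX, hmax⟩ := exists_max_image ({S | #(S.biUnion L) < #S} : Finset (Finset ι))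
    card ⟨S, by simpa using hS⟩
  exact ⟨X, by simpa using hX, fun Y hY => hmax Y (by simpa using hY)⟩

theorem card_le_card_biUnion_sdiff_of_max_card_deficient {X : Finset ι}
    (hX : #(X.biUnion L) ≤ #X) (hmax : ∀ Y : Finset ι, #(Y.biUnion L) < #Y → #Y ≤ #X)
    {T : Finset ι} (hT : Disjoint X T) :
    #T ≤ #(T.biUnion fun i => L i \ X.biUnion L) := by
  classical
  rcases T.eq_empty_or_nonempty with rfl | hTne
  · simp
  have hXT : #(X ∪ T) = #X + #T := card_union_of_disjoint hT
  have hall : #(X ∪ T) ≤ #((X ∪ T).biUnion L) := by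
    by_contra! hlt
    have := hmax _ hlt
    have := hTne.card_pos
    omega
  have hsplit : (X ∪ T).biUnion L ⊆ X.biUnion L ∪ T.biUnion fun i => L i \ X.biUnion L := by
    intro a ha
    simp only [mem_biUnion, mem_union, mem_sdiff] at ha ⊢
    obtain ⟨i, hi | hi, hai⟩ := ha
    · exact Or.inl ⟨i, hi, hai⟩
    · by_cases haX : ∃ j ∈ X, a ∈ L j
      · exact Or.inl haX
      · exact Or.inr ⟨i, hi, hai, haX⟩
  have := (card_le_card hsplit).trans (card_union_le _ _)
  omega

theorem exists_agreeOn_subset_biUnion_card_le {k : ℕ} (hL : ∀ i, k ≤ #(L i)) {X : Finset ι}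
    (hX : X.Nonempty) :
    ∃ L' : ι → Finset α, (∀ i, k ≤ #(L' i)) ∧ (∀ i ∈ X, L' i = L i) ∧
      ∀ i, L' i ⊆ X.biUnion L := by
  classical
  obtain ⟨i₀, hi₀⟩ := hX
  obtain ⟨K, hK, hKcard⟩ :=
    exists_subset_card_eq ((hL i₀).trans (card_le_card (subset_biUnion_of_mem L hi₀)))
  refine ⟨X.piecewise L fun _ => K, fun i => ?_, fun i hi => X.piecewise_eq_of_mem _ _ hi,
    fun i => ?_⟩
  · by_cases hi : i ∈ X <;> simp [hi, hL i, hKcard]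
  · by_cases hi : i ∈ X
    · simpa [hi] using subset_biUnion_of_mem L hi
    · simpa [hi] using hK

end Hall

section ListColoring

variable {V : Type*} {G : SimpleGraph V} {L : V → Finset ℕ}

theorem listColorable_of_hall (hall : ∀ S : Finset V, #S ≤ #(S.biUnion L)) :
    ListColorable G L := by
  obtain ⟨f, hf, hfL⟩ := (all_card_le_biUnion_card_iff_exists_injective L).mp hall
  exact ⟨f, hfL, fun u w huw he => huw.ne (hf he)⟩

theorem listColorable_of_colorOn_of_hall_sdiff (X : Finset V) (c : V → ℕ)
    (hcL : ∀ v ∈ X, c v ∈ L v) (hc : ∀ ⦃u w⦄, u ∈ X → w ∈ X → G.Adj u w → c u ≠ c w)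
    (hall : ∀ T : Finset V, Disjoint X T → #T ≤ #(T.biUnion fun v => L v \ X.biUnion L)) :
    ListColorable G L := by
  classical
  obtain ⟨σ, hσ, hσL⟩ := (all_card_le_biUnion_card_iff_exists_injective
      fun v : {v // v ∉ X} => L v \ X.biUnion L).mp fun s => by
    have hdisj : Disjoint X (s.map (.subtype _)) :=
      disjoint_right.2 fun v hv => by
        obtain ⟨⟨w, hw⟩, -, rfl⟩ := mem_map.1 hv
        exact hw
    simpa [map_eq_image, image_biUnion, card_image_of_injective _ Subtype.val_injective]
      using hall _ hdisj
  set col : V → ℕ := fun v => if hv : v ∈ X then c v else σ ⟨v, hv⟩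
  have hcolL : ∀ v, col v ∈ L v := fun v => by
    by_cases hv : v ∈ X
    · simpa [col, hv] using hcL v hv
    · simpa [col, hv] using (mem_sdiff.1 (hσL ⟨v, hv⟩)).1
  have hcolX : ∀ v, col v ∈ X.biUnion L ↔ v ∈ X := fun v => by
    by_cases hv : v ∈ X
    · simpa [hv] using subset_biUnion_of_mem L hv (hcolL v)
    · simpa [col, hv] using (mem_sdiff.1 (hσL ⟨v, hv⟩)).2
  refine ⟨col, hcolL, fun u w huw he => ?_⟩
  have hiff : u ∈ X ↔ w ∈ X := by rw [← hcolX, ← hcolX, he]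
  by_cases hu : u ∈ X
  · exact hc hu (hiff.1 hu) huw (by simpa [col, hu, hiff.1 hu] using he)
  · have hw : w ∉ X := hiff.not.1 hu
    simp only [col, dif_neg hu, dif_neg hw] at he
    exact huw.ne (congrArg Subtype.val (hσ he))

end ListColoring

theorem kierstead_choosable_general {V : Type*} [Fintype V]
    (G : SimpleGraph V) (k : ℕ)
    (h : ∀ L : V → Finset ℕ, (∀ v, k ≤ (L v).card) →
      (Finset.univ.biUnion L).card < Fintype.card V → ListColorable G L) :
    Choosable G k := by
  intro L hL
  by_cases hall : ∀ S : Finset V, #S ≤ #(S.biUnion L)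
  · exact listColorable_of_hall hall
  simp only [not_forall, not_le] at hall
  obtain ⟨X, hX, hmax⟩ := exists_max_card_deficient L hall
  obtain ⟨L', hL'k, hL'X, hL'sub⟩ :=
    exists_agreeOn_subset_biUnion_card_le L hL (card_pos.1 (Nat.zero_le _ |>.trans_lt hX))
  have hpot : #(univ.biUnion L') < Fintype.card V :=
    calc #(univ.biUnion L') ≤ #(X.biUnion L) :=
          card_le_card (biUnion_subset.2 fun v _ => hL'sub v)
      _ < #X := hX
      _ ≤ Fintype.card V := card_le_univ X
  obtain ⟨c, hcL', hc⟩ := h L' hL'k hpot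
  exact listColorable_of_colorOn_of_hall_sdiff X c (fun v hv => hL'X v hv ▸ hcL' v)
    (fun _ _ _ _ huw => hc huw)
    fun _ hT => card_le_card_biUnion_sdiff_of_max_card_deficient L hX.le hmax hT

/-- Kierstead's lemma: `G` is `k`-choosable provided it is `L`-colorable for every
`k`-list assignment `L` whose total number of colors is less than the number of vertices. -/
theorem kierstead_choosable {V : Type*} [Fintype V] [DecidableEq V]
    (G : SimpleGraph V) (k : ℕ)
    (h : ∀ L : V → Finset ℕ, (∀ v, k ≤ (L v).card) →
      (Finset.univ.biUnion L).card < Fintype.card V → ListColorable G L) :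
    Choosable G k :=
  kierstead_choosable_general G k h
end

section
/- Let G = (V,E) be a finite simple graph and let L be a list assignment such that |L(v)| < |V| for each vertex v ∈ V. If G is L₁-colorable for every list assignment L₁ such that |L₁(V)| < |V| and |L₁(v)| = |L(v)| for each v ∈ V, then G is L-size-choosable, i.e., G is L₁-colorable for every list assignment L₁ with |L₁(v)| = |L(v)| for each v ∈ V. -/
/-- Generalized Kierstead lemma: if every list assignment with the same list sizes as `L`
(all smaller than `|V|`) and fewer total colors than vertices admits a coloring,
then `G` is `L`-size-choosable. -/
theorem size_choosable {V : Type*} [Fintype V] [DecidableEq V] (G : SimpleGraph V)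
    (L : V → Finset ℕ) (hL : ∀ v, (L v).card < Fintype.card V)
    (h : ∀ L₁ : V → Finset ℕ, (Finset.univ.biUnion L₁).card < Fintype.card V →
      (∀ v, (L₁ v).card = (L v).card) → ListColorable G L₁) :
    ∀ L₁ : V → Finset ℕ, (∀ v, (L₁ v).card = (L v).card) → ListColorable G L₁ := by
  intro L₁ hsize
  by_cases hall : ∀ s : Finset V, s.card ≤ (s.biUnion L₁).card
  · -- Hall's condition holds: a system of distinct representatives is a rainbow coloring.
    obtain ⟨f, hfinj, hfmem⟩ :=
      (Finset.all_card_le_biUnion_card_iff_exists_injective L₁).mp hall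
    exact ⟨f, hfmem, fun u w huw => fun hc => (G.ne_of_adj huw) (hfinj hc)⟩
  · -- Otherwise pick S maximizing the deficiency |S| - |⋃_{v∈S} L₁ v|.
    push_neg at hall
    obtain ⟨s₁, hs₁⟩ := hall
    obtain ⟨S, -, hSmax⟩ := Finset.exists_max_image (Finset.univ.powerset)
      (fun s : Finset V => (s.card : ℤ) - ((s.biUnion L₁).card : ℤ))
      ⟨s₁, Finset.mem_powerset.mpr (Finset.subset_univ _)⟩
    set C : Finset ℕ := S.biUnion L₁ with hC
    have hSd : 1 ≤ (S.card : ℤ) - (C.card : ℤ) := by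
      have := hSmax s₁ (Finset.mem_powerset.mpr (Finset.subset_univ _))
      omega
    have hCS : C.card < S.card := by omega
    have hSn : S.card ≤ Fintype.card V := by
      simpa using Finset.card_le_card (Finset.subset_univ S)
    have hn1 : 1 ≤ Fintype.card V := by omega
    -- Hall's condition for the vertices outside S with colors outside C
    have hall2 : ∀ s : Finset {v : V // v ∉ S},
        s.card ≤ (s.biUnion (fun v => L₁ v.val \ C)).card := by
      intro s
      set T : Finset V := s.image Subtype.val with hT
      have hTcard : T.card = s.card := Finset.card_image_of_injective _ Subtype.val_injective
      have hdisj : Disjoint S T := by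
        rw [Finset.disjoint_right]
        intro a haT haS
        obtain ⟨b, -, rfl⟩ := Finset.mem_image.mp haT
        exact b.2 haS
      have hsub : (S ∪ T).biUnion L₁ ⊆ C ∪ T.biUnion (fun v => L₁ v \ C) := by
        intro x hx
        obtain ⟨v, hv, hxv⟩ := Finset.mem_biUnion.mp hx
        rcases Finset.mem_union.mp hv with hvS | hvT
        · exact Finset.mem_union_left _ (Finset.mem_biUnion.mpr ⟨v, hvS, hxv⟩)
        · by_cases hxC : x ∈ C
          · exact Finset.mem_union_left _ hxC
          · exact Finset.mem_union_right _
              (Finset.mem_biUnion.mpr ⟨v, hvT, Finset.mem_sdiff.mpr ⟨hxv, hxC⟩⟩)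
      have h1 : ((S ∪ T).biUnion L₁).card ≤ C.card + (T.biUnion (fun v => L₁ v \ C)).card :=
        le_trans (Finset.card_le_card hsub) (Finset.card_union_le _ _)
      have h2 : (S ∪ T).card = S.card + T.card := Finset.card_union_of_disjoint hdisj
      have h3 := hSmax (S ∪ T) (Finset.mem_powerset.mpr (Finset.subset_univ _))
      have h4 : C.card ≤ ((S ∪ T).biUnion L₁).card :=
        Finset.card_le_card (Finset.biUnion_subset_biUnion_of_subset_left _
          Finset.subset_union_left)
      have h5 : s.biUnion (fun v => L₁ v.val \ C) = T.biUnion (fun v => L₁ v \ C) := by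
        rw [hT, Finset.image_biUnion]
      rw [h5]
      omega
    obtain ⟨g, hginj, hgmem⟩ :=
      (Finset.all_card_le_biUnion_card_iff_exists_injective
        (fun v : {v : V // v ∉ S} => L₁ v.val \ C)).mp hall2
    -- Build the small list assignment
    obtain ⟨P, hCP, hPcard⟩ :=
      Infinite.exists_superset_card_eq C (Fintype.card V - 1) (by omega)
    have hQ : ∀ v : V, ∃ t ⊆ P, t.card = (L₁ v).card := by
      intro v
      refine Finset.exists_subset_card_eq ?_
      rw [hPcard, hsize v]
      have := hL v
      omega
    choose Q hQsub hQcard using hQ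
    set L₂ : V → Finset ℕ := fun v => if v ∈ S then L₁ v else Q v with hL₂
    have hL₂P : ∀ v, L₂ v ⊆ P := by
      intro v
      rw [hL₂]
      by_cases hv : v ∈ S
      · simp only [hv, if_true]
        exact fun x hx => hCP (Finset.mem_biUnion.mpr ⟨v, hv, hx⟩)
      · simp only [hv, if_false]
        exact hQsub v
    obtain ⟨c₂, hc₂mem, hc₂prop⟩ := h L₂ (by
        calc (Finset.univ.biUnion L₂).card ≤ P.card :=
              Finset.card_le_card (Finset.biUnion_subset.mpr fun v _ => hL₂P v)
          _ < Fintype.card V := by omega)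
      (by
        intro v
        rw [hL₂]
        by_cases hv : v ∈ S
        · simp [hv, hsize v]
        · simp [hv, hQcard v, hsize v])
    -- Combine the two colorings
    refine ⟨fun v => if hv : v ∈ S then c₂ v else g ⟨v, hv⟩, ?_, ?_⟩
    · intro v
      by_cases hv : v ∈ S
      · simp only [hv, dif_pos]
        simpa [hL₂, hv] using hc₂mem v
      · simp only [hv, dif_neg, not_false_iff]
        exact (Finset.mem_sdiff.mp (hgmem ⟨v, hv⟩)).1
    · intro u w huw
      by_cases hu : u ∈ S <;> by_cases hw : w ∈ S
      · simpa [hu, hw] using hc₂prop huw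
      · simp only [hu, hw, dif_pos, dif_neg, not_false_iff]
        intro hcontra
        have h1 : c₂ u ∈ C :=
          Finset.mem_biUnion.mpr ⟨u, hu, by simpa [hL₂, hu] using hc₂mem u⟩
        have h2 : g ⟨w, hw⟩ ∉ C := (Finset.mem_sdiff.mp (hgmem ⟨w, hw⟩)).2
        exact h2 (hcontra ▸ h1)
      · simp only [hu, hw, dif_pos, dif_neg, not_false_iff]
        intro hcontra
        have h1 : c₂ w ∈ C :=
          Finset.mem_biUnion.mpr ⟨w, hw, by simpa [hL₂, hw] using hc₂mem w⟩
        have h2 : g ⟨u, hu⟩ ∉ C := (Finset.mem_sdiff.mp (hgmem ⟨u, hu⟩)).2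
        exact h2 (hcontra ▸ h1)
      · simp only [hu, hw, dif_neg, not_false_iff]
        intro hcontra
        exact (G.ne_of_adj huw) (congrArg Subtype.val (hginj hcontra))
end

section
/- (Erdős, Rubin, Taylor) For every integer k ≥ 1, the complete k-partite graph K_{2*k}, in which every part has exactly 2 vertices, has choice number exactly k. -/
/-!
If some part has a colour `a` in both of its lists, colour the part with `a`, delete `a` from all
other lists and recurse on the remaining parts: both the number of parts and the list sizes drop
by one. Otherwise the two lists of every part are disjoint, and Hall's condition holds: a vertex
set containing a whole part sees at least `2k` colours, while one meeting each part at most once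
has at most `k` vertices. A system of distinct representatives is then a proper list colouring.
Conversely, one vertex from each part forms a `k`-clique, so `k` colours are needed.
-/

open Finset SimpleGraph

theorem Choosable.colorable {V : Type*} {G : SimpleGraph V} {n : ℕ} (h : Choosable G n) :
    G.Colorable n := by
  obtain ⟨c, hc, hadj⟩ := h (fun _ => range n) (fun _ => by simp)
  exact ⟨Coloring.mk (fun v => ⟨c v, mem_range.mp (hc v)⟩)
    fun huw h => hadj huw (Fin.val_eq_of_eq h)⟩

theorem ListColorable.of_injective {V : Type*} (G : SimpleGraph V) {L : V → Finset ℕ}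
    {c : V → ℕ} (hinj : c.Injective) (hc : ∀ v, c v ∈ L v) : ListColorable G L :=
  ⟨c, hc, fun _ _ huw h => huw.ne (hinj h)⟩

theorem listColorable_completeMultipartiteGraph_of_forall_mem {ι : Type*} [DecidableEq ι]
    {V : ι → Type*} {L : (Σ i, V i) → Finset ℕ} (i : ι) (a : ℕ) (ha : ∀ b, a ∈ L ⟨i, b⟩)
    (h : ListColorable (completeMultipartiteGraph fun j : {j // j ≠ i} => V j)
      fun v => (L ⟨v.1, v.2⟩).erase a) :
    ListColorable (completeMultipartiteGraph V) L := by
  obtain ⟨c, hc, hadj⟩ := h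
  have hca : ∀ v, c v ≠ a := fun v => (mem_erase.mp (hc v)).1
  refine ⟨fun v => if h : v.1 = i then a else c ⟨⟨v.1, h⟩, v.2⟩, ?_, ?_⟩
  · rintro ⟨j, b⟩
    by_cases h : j = i
    · subst h; simpa using ha b
    · simpa [h] using (mem_erase.mp (hc ⟨⟨j, h⟩, b⟩)).2
  · rintro ⟨j, b⟩ ⟨j', b'⟩ (hjj' : j ≠ j')
    by_cases h : j = i <;> by_cases h' : j' = i
    · exact absurd (h.trans h'.symm) hjj'
    · simpa [h, h'] using (hca _).symm
    · simpa [h, h'] using hca _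
    · simpa [h, h'] using hadj (u := ⟨⟨j, h⟩, b⟩) (w := ⟨⟨j', h'⟩, b'⟩) (by simpa using hjj')

section

variable {ι : Type*} [Fintype ι]

theorem card_le_card_of_no_full_part (s : Finset (Σ _ : ι, Fin 2))
    (hs : ∀ i, ¬(⟨i, 0⟩ ∈ s ∧ ⟨i, 1⟩ ∈ s)) : #s ≤ Fintype.card ι := by
  refine card_le_card_of_injOn Sigma.fst (fun _ _ => mem_coe.mpr (mem_univ _)) ?_
  rintro ⟨i, b⟩ hb ⟨j, b'⟩ hb' (rfl : i = j)
  fin_cases b <;> fin_cases b' <;> simp_all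

theorem card_le_card_biUnion_of_disjoint (L : (Σ _ : ι, Fin 2) → Finset ℕ)
    (hL : ∀ v, Fintype.card ι ≤ #(L v)) (hdisj : ∀ i, Disjoint (L ⟨i, 0⟩) (L ⟨i, 1⟩))
    (s : Finset (Σ _ : ι, Fin 2)) : #s ≤ #(s.biUnion L) := by
  by_cases hpair : ∃ i, ⟨i, 0⟩ ∈ s ∧ ⟨i, 1⟩ ∈ s
  · obtain ⟨i, h0, h1⟩ := hpair
    calc #s ≤ Fintype.card (Σ _ : ι, Fin 2) := card_le_univ s
      _ = Fintype.card ι + Fintype.card ι := by simp [mul_two]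
      _ ≤ #(L ⟨i, 0⟩) + #(L ⟨i, 1⟩) := add_le_add (hL _) (hL _)
      _ = #(L ⟨i, 0⟩ ∪ L ⟨i, 1⟩) := (card_union_of_disjoint (hdisj i)).symm
      _ ≤ #(s.biUnion L) := card_le_card (union_subset (subset_biUnion_of_mem L h0)
          (subset_biUnion_of_mem L h1))
  · obtain rfl | ⟨v, hv⟩ := s.eq_empty_or_nonempty
    · simp
    calc #s ≤ Fintype.card ι := card_le_card_of_no_full_part s (not_exists.mp hpair)
      _ ≤ #(L v) := hL v
      _ ≤ #(s.biUnion L) := card_le_card (subset_biUnion_of_mem L hv)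

end

theorem choosable_completeMultipartiteGraph_fin_two (ι : Type*) [Fintype ι] :
    Choosable (completeMultipartiteGraph fun _ : ι => Fin 2) (Fintype.card ι) := by
  classical
  intro L hL
  by_cases hshared : ∃ i a, ∀ b, a ∈ L ⟨i, b⟩
  · obtain ⟨i, a, ha⟩ := hshared
    refine listColorable_completeMultipartiteGraph_of_forall_mem i a ha ?_
    refine choosable_completeMultipartiteGraph_fin_two {j // j ≠ i} _ fun v => ?_
    calc Fintype.card {j // j ≠ i} = Fintype.card ι - 1 := Set.card_ne_eq i
      _ ≤ #(L ⟨v.1, v.2⟩) - 1 := Nat.sub_le_sub_right (hL _) 1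
      _ ≤ #((L ⟨v.1, v.2⟩).erase a) := pred_card_le_card_erase
  · have hdisj : ∀ i, Disjoint (L ⟨i, 0⟩) (L ⟨i, 1⟩) := fun i =>
      disjoint_left.mpr fun a h0 h1 => hshared ⟨i, a, Fin.forall_fin_two.mpr ⟨h0, h1⟩⟩
    obtain ⟨c, hinj, hc⟩ := (all_card_le_biUnion_card_iff_exists_injective L).mp
      (card_le_card_biUnion_of_disjoint L hL hdisj)
    exact .of_injective _ hinj hc
termination_by Fintype.card ι
decreasing_by classical exact Fintype.card_subtype_lt (x := i) (by simp)

theorem choiceNumber_K2xk_general (k : ℕ) :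
    IsLeast {n | Choosable (SimpleGraph.completeMultipartiteGraph
      (fun _ : Fin k => Fin 2)) n} k := by
  refine ⟨by simpa using choosable_completeMultipartiteGraph_fin_two (Fin k), fun n hn => ?_⟩
  have hχ := completeMultipartiteGraph.chromaticNumber (fun _ : Fin k => Fin 2) fun _ => 0
  simpa [hχ] using chromaticNumber_le_iff_colorable.mpr hn.colorable

/-- Erdős–Rubin–Taylor: `Ch(K_{2*k}) = k`. -/
theorem choiceNumber_K2xk (k : ℕ) (hk : 1 ≤ k) :
    IsLeast {n | Choosable (SimpleGraph.completeMultipartiteGraph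
      (fun _ : Fin k => Fin 2)) n} k :=
  choiceNumber_K2xk_general k
end
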